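/- The product-optimizing convex policy is continuous: let C and Cₘ (m ∈ ℕ) be nonempty compact convex subsets of ℝ₊ⁿ such that sup_{u∈C} ∏ₖ uₖ > 0 and sup_{u∈Cₘ} ∏ₖ uₖ > 0 for every m, let x be the unique maximizer of ∏ₖ uₖ over C and xₘ the unique maximizer of ∏ₖ uₖ over Cₘ. If Cₘ → C in Hausdorff distance, then xₘ → x. -/

import Mathlib

/-!
The maximizer of `∏ k, u k` over a compact convex subset of the nonnegative orthant with positive
maximum is unique: two distinct maximizers `x ≠ y` would have a midpoint with
`(∏ k, (x k + y k) / 2) ^ 2 > (∏ k, x k) * (∏ k, y k)` by AM-GM. Continuity of the maximizer is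
then an instance of Berge's maximum theorem: a cluster point `a` of the `xₘ` lies in `C`, and
comparing `xₘ` with points of `Cₘ` converging to `x` gives `∏ k, x k ≤ ∏ k, a k`, so `a = x` by
uniqueness; since the `xₘ` eventually lie in the compact set `cthickening 1 C`, they converge.
-/

open Filter Metric Topology Bornology

section HausdorffConvergence

variable {E : Type*} [MetricSpace E] {C : Set E} {Cm : ℕ → Set E}

lemma tendsto_infDist_of_hausdorffDist_tendsto (hC : IsBounded C) (hC_ne : C.Nonempty)
    (hCm : ∀ m, IsBounded (Cm m)) {y : ℕ → E} (hy : ∀ m, y m ∈ Cm m)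
    (hconv : Tendsto (fun m => hausdorffDist (Cm m) C) atTop (𝓝 0)) :
    Tendsto (fun m => infDist (y m) C) atTop (𝓝 0) :=
  squeeze_zero (fun _ => infDist_nonneg) (fun m => infDist_le_hausdorffDist_of_mem (hy m)
    (hausdorffEDist_ne_top_of_nonempty_of_bounded ⟨y m, hy m⟩ hC_ne (hCm m) hC)) hconv

lemma exists_tendsto_of_hausdorffDist_tendsto (hC : IsBounded C) (hCm : ∀ m, IsCompact (Cm m))
    (hCm_ne : ∀ m, (Cm m).Nonempty) {x : E} (hx : x ∈ C)
    (hconv : Tendsto (fun m => hausdorffDist (Cm m) C) atTop (𝓝 0)) :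
    ∃ c : ℕ → E, (∀ m, c m ∈ Cm m) ∧ Tendsto c atTop (𝓝 x) := by
  have hclose : ∀ m, ∃ c ∈ Cm m, dist c x ≤ hausdorffDist (Cm m) C := by
    intro m
    obtain ⟨c, hc, hdist⟩ := (hCm m).exists_infDist_eq_dist (hCm_ne m) x
    refine ⟨c, hc, ?_⟩
    rw [dist_comm, ← hdist, hausdorffDist_comm]
    exact infDist_le_hausdorffDist_of_mem hx
      (hausdorffEDist_ne_top_of_nonempty_of_bounded ⟨x, hx⟩ (hCm_ne m) hC (hCm m).isBounded)
  choose c hc hdist using hclose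
  exact ⟨c, hc, tendsto_iff_dist_tendsto_zero.2 <|
    squeeze_zero (fun _ => dist_nonneg) hdist hconv⟩

theorem tendsto_of_isMaxOn_of_hausdorffDist_tendsto [ProperSpace E] {f : E → ℝ}
    (hf : Continuous f) (hC : IsCompact C) (hCm : ∀ m, IsCompact (Cm m))
    {x : E} (hx : x ∈ C) (huniq : ∀ y ∈ C, f x ≤ f y → y = x)
    {xm : ℕ → E} (hxm : ∀ m, xm m ∈ Cm m) (hmax : ∀ m, IsMaxOn f (Cm m) (xm m))
    (hconv : Tendsto (fun m => hausdorffDist (Cm m) C) atTop (𝓝 0)) :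
    Tendsto xm atTop (𝓝 x) := by
  have hinf := tendsto_infDist_of_hausdorffDist_tendsto hC.isBounded ⟨x, hx⟩
    (fun m => (hCm m).isBounded) hxm hconv
  obtain ⟨c, hc, hcx⟩ := exists_tendsto_of_hausdorffDist_tendsto hC.isBounded hCm
    (fun m => ⟨xm m, hxm m⟩) hx hconv
  have hev : ∀ᶠ m in atTop, xm m ∈ cthickening 1 C := by
    filter_upwards [hinf.eventually (gt_mem_nhds one_pos)] with m hm
    exact thickening_subset_cthickening 1 C ((mem_thickening_iff_infDist_lt ⟨x, hx⟩).2 hm)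
  refine hC.cthickening.tendsto_nhds_of_unique_mapClusterPt hev fun a _ ha => ?_
  obtain ⟨ψ, hψ, hψa⟩ := ha.tendsto_subseq
  have haC : a ∈ C := by
    refine (hC.isClosed.mem_iff_infDist_zero ⟨x, hx⟩).2 (tendsto_nhds_unique ?_
      (hinf.comp hψ.tendsto_atTop))
    exact ((continuous_infDist_pt C).tendsto a).comp hψa
  refine huniq a haC (le_of_tendsto_of_tendsto' ((hf.tendsto x).comp
    (hcx.comp hψ.tendsto_atTop)) ((hf.tendsto a).comp hψa) fun j => ?_)
  exact hmax (ψ j) (hc (ψ j))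

end HausdorffConvergence

section ProductOfCoordinates

variable {ι : Type*} [Fintype ι]

lemma prod_mul_prod_lt_prod_midpoint_sq {x y : ι → ℝ} (hx : ∀ k, 0 < x k) (hy : ∀ k, 0 < y k)
    (hxy : x ≠ y) : (∏ k, x k) * (∏ k, y k) < (∏ k, (x k + y k) / 2) ^ 2 := by
  obtain ⟨k₀, hk₀⟩ := Function.ne_iff.1 hxy
  rw [← Finset.prod_mul_distrib, ← Finset.prod_pow]
  refine Finset.prod_lt_prod (fun k _ => mul_pos (hx k) (hy k))
    (fun k _ => by nlinarith [sq_nonneg (x k - y k)]) ⟨k₀, Finset.mem_univ _, ?_⟩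
  nlinarith [sq_pos_of_ne_zero (sub_ne_zero.2 hk₀)]

lemma pos_of_prod_pos {u : ι → ℝ} (hu : ∀ k, 0 ≤ u k) (hprod : 0 < ∏ k, u k) (k : ι) :
    0 < u k :=
  (hu k).lt_of_ne fun h => hprod.ne' (Finset.prod_eq_zero (Finset.mem_univ k) h.symm)

lemma eq_of_isMaxOn_prod {C : Set (ι → ℝ)} (hC : Convex ℝ C) (hC_sub : C ⊆ {u | ∀ k, 0 ≤ u k})
    {x y : ι → ℝ} (hx : x ∈ C) (hy : y ∈ C) (hmax : IsMaxOn (fun u => ∏ k, u k) C x)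
    (hpos : 0 < ∏ k, x k) (hle : ∏ k, x k ≤ ∏ k, y k) : y = x := by
  by_contra hne
  have hmid : (fun k => (x k + y k) / 2) ∈ C := by
    convert hC hx hy (by norm_num : (0 : ℝ) ≤ 1 / 2) (by norm_num : (0 : ℝ) ≤ 1 / 2)
      (by norm_num) using 1
    ext k
    simp only [Pi.add_apply, Pi.smul_apply, smul_eq_mul]
    ring
  have hmid_le : ∏ k, (x k + y k) / 2 ≤ ∏ k, x k := hmax hmid
  have hmid_nonneg : 0 ≤ ∏ k, (x k + y k) / 2 :=
    Finset.prod_nonneg fun k _ => by linarith [hC_sub hx k, hC_sub hy k]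
  have hlt := prod_mul_prod_lt_prod_midpoint_sq (pos_of_prod_pos (hC_sub hx) hpos)
    (pos_of_prod_pos (hC_sub hy) (hpos.trans_le hle)) (Ne.symm hne)
  nlinarith

end ProductOfCoordinates

lemma isMaxOn_of_eq_sSup_image {α : Type*} {f : α → ℝ} {s : Set α} {a : α}
    (hbdd : BddAbove (f '' s)) (h : f a = sSup (f '' s)) : IsMaxOn f s a :=
  fun _ hu => h ▸ le_csSup hbdd (Set.mem_image_of_mem f hu)

theorem product_optimizing_policy_continuous_general (n : ℕ)
    (C : Set (Fin n → ℝ)) (Cm : ℕ → Set (Fin n → ℝ))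
    (hC_cpt : IsCompact C) (hC_cvx : Convex ℝ C)
    (hC_sub : C ⊆ {u | ∀ k, 0 ≤ u k})
    (hCm_cpt : ∀ m, IsCompact (Cm m))
    (hC_pos : 0 < sSup ((fun u : Fin n → ℝ => ∏ k, u k) '' C))
    (x : Fin n → ℝ) (hx : x ∈ C)
    (hx_max : (∏ k, x k) = sSup ((fun u : Fin n → ℝ => ∏ k, u k) '' C))
    (xm : ℕ → Fin n → ℝ) (hxm : ∀ m, xm m ∈ Cm m)
    (hxm_max : ∀ m, (∏ k, xm m k) = sSup ((fun u : Fin n → ℝ => ∏ k, u k) '' Cm m))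
    (hconv : Filter.Tendsto (fun m => Metric.hausdorffDist (Cm m) C)
      Filter.atTop (nhds 0)) :
    Filter.Tendsto xm Filter.atTop (nhds x) := by
  have hcont : Continuous fun u : Fin n → ℝ => ∏ k, u k := by fun_prop
  have hx_isMax := isMaxOn_of_eq_sSup_image (hC_cpt.image hcont).bddAbove hx_max
  refine tendsto_of_isMaxOn_of_hausdorffDist_tendsto hcont hC_cpt hCm_cpt hx
    (fun y hy hle => eq_of_isMaxOn_prod hC_cvx hC_sub hx hy hx_isMax (hx_max ▸ hC_pos) hle)
    hxm (fun m => isMaxOn_of_eq_sSup_image ((hCm_cpt m).image hcont).bddAbove (hxm_max m)) hconv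

/-- The product-optimizing convex policy is continuous: if nonempty compact convex sets
`Cₘ ⊆ ℝ₊ⁿ` (on which the supremum of the product of coordinates is positive) converge in
Hausdorff distance to such a set `C`, then the unique product maximizers `xₘ` of the `Cₘ`
converge to the unique product maximizer `x` of `C`. -/
theorem product_optimizing_policy_continuous (n : ℕ) (hn : 1 ≤ n)
    (C : Set (Fin n → ℝ)) (Cm : ℕ → Set (Fin n → ℝ))
    (hC_ne : C.Nonempty) (hC_cpt : IsCompact C) (hC_cvx : Convex ℝ C)
    (hC_sub : C ⊆ {u | ∀ k, 0 ≤ u k})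
    (hCm_ne : ∀ m, (Cm m).Nonempty) (hCm_cpt : ∀ m, IsCompact (Cm m))
    (hCm_cvx : ∀ m, Convex ℝ (Cm m)) (hCm_sub : ∀ m, Cm m ⊆ {u | ∀ k, 0 ≤ u k})
    (hC_pos : 0 < sSup ((fun u : Fin n → ℝ => ∏ k, u k) '' C))
    (hCm_pos : ∀ m, 0 < sSup ((fun u : Fin n → ℝ => ∏ k, u k) '' Cm m))
    (x : Fin n → ℝ) (hx : x ∈ C)
    (hx_max : (∏ k, x k) = sSup ((fun u : Fin n → ℝ => ∏ k, u k) '' C))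
    (xm : ℕ → Fin n → ℝ) (hxm : ∀ m, xm m ∈ Cm m)
    (hxm_max : ∀ m, (∏ k, xm m k) = sSup ((fun u : Fin n → ℝ => ∏ k, u k) '' Cm m))
    (hconv : Filter.Tendsto (fun m => Metric.hausdorffDist (Cm m) C)
      Filter.atTop (nhds 0)) :
    Filter.Tendsto xm Filter.atTop (nhds x) :=
  product_optimizing_policy_continuous_general n C Cm hC_cpt hC_cvx hC_sub hCm_cpt hC_pos x hx
    hx_max xm hxm hxm_max hconv
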